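/- arXiv:2209.00229 — 4 statements merged into one kernel-verified Lean document; each statement's English description precedes it below -/
import Mathlib

section
/- Let 0 < α_j < 1 and ω_{α_j}(t) = t^{α_j−1}/Γ(α_j). For a nonuniform time mesh 0 = t_0 < t_1 < ⋯ with k_n = t_n − t_{n−1}, the product-integration weight w_{np}^{(j)} = (1/(k_n k_p)) ∫_{t_{n−1}}^{t_n} ∫_{t_{p−1}}^{min{t, t_p}} ω_{α_j}(t−θ) dθ dt satisfies: (i) w_{np}^{(j)} > 0 for all 1 ≤ p ≤ n; (ii) for p ≤ n−1, w_{np}^{(j)} = (λ_{n,p} − λ_{n−1,p})/(k_n k_p Γ(α_j+2)) where λ_{n,p} = (t_n − t_{p−1})^{α_j+1} − (t_n − t_p)^{α_j+1}; (iii) w_{nn}^{(j)} = k_n^{α_j−1}/Γ(α_j+2). -/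
open MeasureTheory intervalIntegral Real

/-!
Both integrals are elementary: integrating the kernel `(s - θ) ^ (α - 1) / Γ(α)` in `θ` and then
`(s - c) ^ α` in `s` yields powers with exponent `α + 1` over `(α + 1) α Γ(α) = Γ(α + 2)`.
Off the diagonal the upper limit `min s t_p` is identically `t_p`, giving `λ_{n,p} - λ_{n-1,p}`;
on the diagonal it is `s`, leaving `k_n ^ (α + 1)`. Off-diagonal positivity is the strict
monotonicity of `x ↦ (x - c) ^ (α + 1) - (x - d) ^ (α + 1)` on `[d, ∞)` for `c < d`.
-/

lemma Real.Gamma_add_two {α : ℝ} (h₀ : α ≠ 0) (h₁ : α + 1 ≠ 0) :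
    Gamma (α + 2) = (α + 1) * (α * Gamma α) := by
  rw [show α + 2 = α + 1 + 1 by ring, Gamma_add_one h₁, Gamma_add_one h₀]

lemma integral_sub_rpow_div_Gamma {α : ℝ} (hα : 0 < α) (a b s : ℝ) :
    ∫ θ in a..b, (s - θ) ^ (α - 1) / Gamma α
      = ((s - a) ^ α - (s - b) ^ α) / (α * Gamma α) := by
  rw [intervalIntegral.integral_div, integral_comp_sub_left (fun x => x ^ (α - 1)) s,
    integral_rpow (Or.inl (by linarith)), sub_add_cancel, div_div]

lemma integral_rpow_sub_const {α : ℝ} (hα : -1 < α) (a b c : ℝ) :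
    ∫ s in a..b, (s - c) ^ α = ((b - c) ^ (α + 1) - (a - c) ^ (α + 1)) / (α + 1) := by
  rw [integral_comp_sub_right (fun x => x ^ α) c]
  exact integral_rpow (Or.inl hα)

lemma continuous_rpow_sub_const {α : ℝ} (hα : 0 ≤ α) (c : ℝ) :
    Continuous fun s : ℝ => (s - c) ^ α :=
  (continuous_id.sub continuous_const).rpow_const fun _ => Or.inr hα

lemma integral_integral_sub_rpow_div_Gamma_of_le {α a b d : ℝ} (hα : 0 < α) (c : ℝ)
    (hda : d ≤ a) (hab : a ≤ b) :
    ∫ s in a..b, ∫ θ in c..min s d, (s - θ) ^ (α - 1) / Gamma α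
      = (((b - c) ^ (α + 1) - (b - d) ^ (α + 1)) - ((a - c) ^ (α + 1) - (a - d) ^ (α + 1)))
        / Gamma (α + 2) := by
  have h_inner : Set.EqOn (fun s => ∫ θ in c..min s d, (s - θ) ^ (α - 1) / Gamma α)
      (fun s => ((s - c) ^ α - (s - d) ^ α) / (α * Gamma α)) (Set.uIcc a b) := by
    intro s hs
    rw [Set.uIcc_of_le hab] at hs
    simp only [min_eq_right (hda.trans hs.1), integral_sub_rpow_div_Gamma hα]
  rw [integral_congr h_inner, intervalIntegral.integral_div,
    integral_sub ((continuous_rpow_sub_const hα.le c).intervalIntegrable a b)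
      ((continuous_rpow_sub_const hα.le d).intervalIntegrable a b),
    integral_rpow_sub_const (by linarith), integral_rpow_sub_const (by linarith),
    Gamma_add_two hα.ne' (by linarith), ← sub_div, div_div]
  ring

lemma integral_integral_sub_rpow_div_Gamma_diag {α a b : ℝ} (hα : 0 < α) (hab : a ≤ b) :
    ∫ s in a..b, ∫ θ in a..min s b, (s - θ) ^ (α - 1) / Gamma α
      = (b - a) ^ (α + 1) / Gamma (α + 2) := by
  have h_inner : Set.EqOn (fun s => ∫ θ in a..min s b, (s - θ) ^ (α - 1) / Gamma α)
      (fun s => (s - a) ^ α / (α * Gamma α)) (Set.uIcc a b) := by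
    intro s hs
    rw [Set.uIcc_of_le hab] at hs
    simp only [min_eq_left hs.2, integral_sub_rpow_div_Gamma hα, sub_self,
      zero_rpow hα.ne', sub_zero]
  rw [integral_congr h_inner, intervalIntegral.integral_div,
    integral_rpow_sub_const (by linarith), sub_self, zero_rpow (by linarith), sub_zero, div_div,
    Gamma_add_two hα.ne' (by linarith)]

lemma strictMonoOn_rpow_sub_sub_rpow_sub {α c d : ℝ} (hα : 0 < α) (hcd : c < d) :
    StrictMonoOn (fun x => (x - c) ^ (α + 1) - (x - d) ^ (α + 1)) (Set.Ici d) := by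
  have h_deriv (x : ℝ) : HasDerivAt (fun x => (x - c) ^ (α + 1) - (x - d) ^ (α + 1))
      ((α + 1) * ((x - c) ^ α - (x - d) ^ α)) x := by
    have hc := ((hasDerivAt_id x).sub_const c).rpow_const (p := α + 1) (Or.inr (by linarith))
    have hd := ((hasDerivAt_id x).sub_const d).rpow_const (p := α + 1) (Or.inr (by linarith))
    exact (hc.sub hd).congr_deriv (by rw [add_sub_cancel_right, id]; ring)
  refine strictMonoOn_of_deriv_pos (convex_Ici d)
    (fun x _ => (h_deriv x).continuousAt.continuousWithinAt) fun x hx => ?_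
  rw [interior_Ici, Set.mem_Ioi] at hx
  rw [(h_deriv x).deriv]
  exact mul_pos (by linarith) (sub_pos.2 (rpow_lt_rpow (by linarith) (by linarith) hα))

theorem stmt_3_general (α : ℝ) (hα : 0 < α ∧ α < 1)
    (t : ℕ → ℝ) (htmono : StrictMono t)
    (w lam : ℕ → ℕ → ℝ)
    (hw : ∀ n p, w n p = (1 / ((t n - t (n - 1)) * (t p - t (p - 1)))) *
      ∫ s in (t (n - 1))..(t n),
        ∫ θ in (t (p - 1))..(min s (t p)), (s - θ) ^ (α - 1) / Real.Gamma α)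
    (hlam : ∀ n p, lam n p = (t n - t (p - 1)) ^ (α + 1) - (t n - t p) ^ (α + 1)) :
    (∀ n p, 1 ≤ p → p ≤ n → 0 < w n p) ∧
    (∀ n p, 1 ≤ p → p ≤ n - 1 → w n p =
      (lam n p - lam (n - 1) p) /
        ((t n - t (n - 1)) * (t p - t (p - 1)) * Real.Gamma (α + 2))) ∧
    (∀ n, 1 ≤ n → w n n = (t n - t (n - 1)) ^ (α - 1) / Real.Gamma (α + 2)) := by
  obtain ⟨hα, -⟩ := hα
  have hstep {n : ℕ} (hn : 1 ≤ n) : t (n - 1) < t n := htmono (by omega)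
  have hGamma : 0 < Gamma (α + 2) := Gamma_pos_of_pos (by linarith)
  have hoff (n p : ℕ) (hp : 1 ≤ p) (hpn : p ≤ n - 1) : w n p =
      (lam n p - lam (n - 1) p) /
        ((t n - t (n - 1)) * (t p - t (p - 1)) * Gamma (α + 2)) := by
    rw [hw, integral_integral_sub_rpow_div_Gamma_of_le hα _ (htmono.monotone hpn)
      (hstep (by omega)).le, hlam, hlam]
    field_simp [(sub_pos.2 (hstep (by omega : 1 ≤ n))).ne', (sub_pos.2 (hstep hp)).ne']
  have hdiag (n : ℕ) (hn : 1 ≤ n) : w n n = (t n - t (n - 1)) ^ (α - 1) / Gamma (α + 2) := by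
    have hk := (sub_pos.2 (hstep hn)).ne'
    rw [hw, integral_integral_sub_rpow_div_Gamma_diag hα (hstep hn).le, rpow_add_one hk,
      rpow_sub_one hk]
    field_simp
  refine ⟨fun n p hp hpn => ?_, hoff, hdiag⟩
  rcases hpn.eq_or_lt with rfl | hpn
  · rw [hdiag p hp]
    exact div_pos (rpow_pos_of_pos (sub_pos.2 (hstep hp)) _) hGamma
  · have hn : 1 ≤ n := by omega
    have htp : t p ≤ t (n - 1) := htmono.monotone (by omega)
    rw [hoff n p hp (by omega), hlam, hlam]
    refine div_pos (sub_pos.2 ?_) (mul_pos (mul_pos (sub_pos.2 (hstep hn))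
      (sub_pos.2 (hstep hp))) hGamma)
    exact strictMonoOn_rpow_sub_sub_rpow_sub hα (hstep hp) htp
      (htp.trans (hstep hn).le) (hstep hn)

/-- Properties of the product-integration weights
`w_{np} = (1/(kₙ kₚ)) ∫_{t_{n-1}}^{t_n} ∫_{t_{p-1}}^{min(t,t_p)} ω_α(t-θ) dθ dt`:
positivity, the closed formula for `p ≤ n-1`, and the exact value on the diagonal. -/
theorem stmt_3 (α : ℝ) (hα : 0 < α ∧ α < 1)
    (t : ℕ → ℝ) (ht0 : t 0 = 0) (htmono : StrictMono t)
    (w lam : ℕ → ℕ → ℝ)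
    (hw : ∀ n p, w n p = (1 / ((t n - t (n - 1)) * (t p - t (p - 1)))) *
      ∫ s in (t (n - 1))..(t n),
        ∫ θ in (t (p - 1))..(min s (t p)), (s - θ) ^ (α - 1) / Real.Gamma α)
    (hlam : ∀ n p, lam n p = (t n - t (p - 1)) ^ (α + 1) - (t n - t p) ^ (α + 1)) :
    (∀ n p, 1 ≤ p → p ≤ n → 0 < w n p) ∧
    (∀ n p, 1 ≤ p → p ≤ n - 1 → w n p =
      (lam n p - lam (n - 1) p) /
        ((t n - t (n - 1)) * (t p - t (p - 1)) * Real.Gamma (α + 2))) ∧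
    (∀ n, 1 ≤ n → w n n = (t n - t (n - 1)) ^ (α - 1) / Real.Gamma (α + 2)) :=
  stmt_3_general α hα t htmono w lam hw hlam
end

section
/- Let B be a self-adjoint positive semidefinite bounded operator on a real Hilbert space H, let k_1,…,k_N > 0, and let w_{np} > 0 be the product-integration weights of a nonnegative-definite kernel ω_α as in the paper. Then for any V^0,…,V^N ∈ H, setting I^{(α)}V^{n−1/2} = w_{n1} V^1 k_1 + Σ_{p=2}^n w_{np} V^{p−1/2} k_p with V^{p−1/2} = (V^p + V^{p−1})/2, one has k_1 (I^{(α)} B V^{1/2}, V^1) + Σ_{n=2}^N k_n (I^{(α)} B V^{n−1/2}, V^{n−1/2}) ≥ 0. -/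
/-!
Off the diagonal the unnormalised weights `kₙ kₚ wₙₚ` are the mixed second differences of
`Φ(i, j) = |tᵢ - tⱼ| ^ (α + 1) / Γ(α + 2)`, on the diagonal half of them. As `B` is symmetric, the
quadratic form is therefore half the full double sum of these differences against `(B Wₚ, Wₙ)`,
and summing by parts in both indices turns it into `-½ ∑ᵢⱼ Φ(i, j) (B Yᵢ, Yⱼ)`, where
`Yᵢ = Wᵢ₊₁ - Wᵢ` (with `W` extended by zero) sums to zero. This is nonnegative because `|x| ^ β` is conditionally negative definite for
`0 < β < 2`: `|x| ^ β` is a positive multiple of `∫₀^∞ (1 - cos xξ) ξ ^ (-1 - β) dξ`, and for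
`∑ Yᵢ = 0` the sum `∑ᵢⱼ (1 - cos (uᵢ - uⱼ)ξ) (B Yᵢ, Yⱼ)` equals `-(B C, C) - (B S, S)` with
`C, S` the cosine and sine transforms of `Y`.
-/

open MeasureTheory intervalIntegral Real Finset

section OneSubCos

variable {β : ℝ}

lemma integrableOn_one_sub_cos_mul_mul_rpow (hβ0 : 0 < β) (hβ2 : β < 2) (u : ℝ) :
    IntegrableOn (fun ξ ↦ (1 - cos (u * ξ)) * ξ ^ (-1 - β)) (Set.Ioi 0) := by
  have hmeas : ∀ s : Set ℝ, AEStronglyMeasurable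
      (fun ξ : ℝ ↦ (1 - cos (u * ξ)) * ξ ^ (-1 - β)) (volume.restrict s) := fun _ ↦ by
    fun_prop
  rw [← Set.Ioc_union_Ioi_eq_Ioi zero_le_one]
  refine IntegrableOn.union ?_ ?_
  · have hg : IntegrableOn (fun ξ : ℝ ↦ u ^ 2 / 2 * ξ ^ (1 - β)) (Set.Ioc 0 1) := by
      have := intervalIntegral.intervalIntegrable_rpow' (a := 0) (b := 1)
        (by linarith : (-1 : ℝ) < 1 - β)
      rw [intervalIntegrable_iff_integrableOn_Ioc_of_le zero_le_one] at this
      exact this.const_mul _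
    refine hg.mono' (hmeas _) ((ae_restrict_iff' measurableSet_Ioc).2 ?_)
    filter_upwards with ξ hξ
    have hξ0 : 0 < ξ := hξ.1
    have hcos : 1 - cos (u * ξ) ≤ (u * ξ) ^ 2 / 2 := by
      linarith [one_sub_sq_div_two_le_cos (x := u * ξ)]
    have hpow : ξ ^ (1 - β) = ξ ^ 2 * ξ ^ (-1 - β) := by
      rw [← rpow_natCast, ← rpow_add hξ0]; norm_num; ring_nf
    rw [norm_of_nonneg (mul_nonneg (sub_nonneg.2 (cos_le_one _)) (rpow_nonneg hξ0.le _)), hpow]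
    calc (1 - cos (u * ξ)) * ξ ^ (-1 - β) ≤ (u * ξ) ^ 2 / 2 * ξ ^ (-1 - β) := by gcongr
      _ = _ := by ring
  · have hg : IntegrableOn (fun ξ : ℝ ↦ 2 * ξ ^ (-1 - β)) (Set.Ioi 1) :=
      (integrableOn_Ioi_rpow_of_lt (by linarith) one_pos).const_mul 2
    refine hg.mono' (hmeas _) ((ae_restrict_iff' measurableSet_Ioi).2 ?_)
    filter_upwards with ξ hξ
    have hξ0 : (0 : ℝ) < ξ := one_pos.trans hξ
    rw [norm_of_nonneg (mul_nonneg (sub_nonneg.2 (cos_le_one _)) (rpow_nonneg hξ0.le _))]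
    gcongr
    linarith [neg_one_le_cos (u * ξ)]

lemma integral_one_sub_cos_mul_mul_rpow (hβ0 : 0 < β) (u : ℝ) :
    ∫ ξ in Set.Ioi 0, (1 - cos (u * ξ)) * ξ ^ (-1 - β) =
      |u| ^ β * ∫ ξ in Set.Ioi 0, (1 - cos ξ) * ξ ^ (-1 - β) := by
  rcases eq_or_ne u 0 with rfl | hu
  · simp [zero_rpow hβ0.ne']
  have ha : 0 < |u| := abs_pos.2 hu
  have hsubst := integral_comp_mul_left_Ioi (fun ξ ↦ (1 - cos ξ) * ξ ^ (-1 - β)) 0 ha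
  have hpt : ∀ ξ ∈ Set.Ioi (0 : ℝ), (1 - cos (|u| * ξ)) * (|u| * ξ) ^ (-1 - β) =
      |u| ^ (-1 - β) * ((1 - cos (u * ξ)) * ξ ^ (-1 - β)) := fun ξ hξ ↦ by
    have hcos : cos (|u| * ξ) = cos (u * ξ) := by
      rw [← cos_abs (u * ξ), abs_mul, abs_of_pos (show (0 : ℝ) < ξ from hξ)]
    rw [hcos, mul_rpow ha.le (le_of_lt hξ)]
    ring
  rw [setIntegral_congr_fun measurableSet_Ioi hpt, MeasureTheory.integral_const_mul, mul_zero,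
    smul_eq_mul] at hsubst
  have hpow : |u| ^ (-1 - β) = |u|⁻¹ * (|u| ^ β)⁻¹ := by
    rw [sub_eq_add_neg, rpow_add ha, rpow_neg ha.le, rpow_neg ha.le, rpow_one]
  rw [hpow] at hsubst
  field_simp at hsubst
  linear_combination hsubst

lemma integral_one_sub_cos_mul_rpow_pos (hβ0 : 0 < β) (hβ2 : β < 2) :
    0 < ∫ ξ in Set.Ioi 0, (1 - cos ξ) * ξ ^ (-1 - β) := by
  have hint := integrableOn_one_sub_cos_mul_mul_rpow hβ0 hβ2 1
  simp only [one_mul] at hint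
  have hnonneg : 0 ≤ᵐ[volume.restrict (Set.Ioi 0)] fun ξ : ℝ ↦ (1 - cos ξ) * ξ ^ (-1 - β) := by
    filter_upwards [ae_restrict_mem measurableSet_Ioi] with ξ hξ
    exact mul_nonneg (sub_nonneg.2 (cos_le_one ξ)) (rpow_nonneg (le_of_lt hξ) _)
  rw [setIntegral_pos_iff_support_of_nonneg_ae hnonneg hint]
  have hsupp : Set.Ioo 0 (2 * π) ⊆
      Function.support (fun ξ : ℝ ↦ (1 - cos ξ) * ξ ^ (-1 - β)) ∩ Set.Ioi 0 := by
    rintro ξ ⟨hξ0, hξ2π⟩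
    have hcos : cos ξ ≠ 1 := fun h ↦
      hξ0.ne' ((cos_eq_one_iff_of_lt_of_lt (by linarith [pi_pos]) hξ2π).1 h)
    exact ⟨mul_ne_zero (sub_ne_zero.2 hcos.symm) (rpow_pos_of_pos hξ0 _).ne', hξ0⟩
  refine lt_of_lt_of_le ?_ (measure_mono hsupp)
  simp [pi_pos]

end OneSubCos

section ConditionallyNegativeDefinite

variable {ι M : Type*} [AddCommGroup M] [Module ℝ M]

lemma LinearMap.BilinForm.apply_sum_smul_sum_smul (f : LinearMap.BilinForm ℝ M) (s : Finset ι)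
    (c d : ι → ℝ) (Y : ι → M) :
    f (∑ i ∈ s, c i • Y i) (∑ j ∈ s, d j • Y j) =
      ∑ i ∈ s, ∑ j ∈ s, c i * d j * f (Y i) (Y j) := by
  simp only [map_sum, map_smul, LinearMap.sum_apply, LinearMap.smul_apply, smul_eq_mul,
    mul_sum]
  rw [sum_comm]
  exact sum_congr rfl fun _ _ ↦ sum_congr rfl fun _ _ ↦ by ring

theorem sum_sum_abs_sub_rpow_mul_nonpos {β : ℝ} (hβ0 : 0 < β) (hβ2 : β < 2)
    {f : LinearMap.BilinForm ℝ M} (hf : f.IsNonneg) (s : Finset ι) (u : ι → ℝ) (Y : ι → M)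
    (hY : ∑ i ∈ s, Y i = 0) :
    ∑ i ∈ s, ∑ j ∈ s, |u i - u j| ^ β * f (Y i) (Y j) ≤ 0 := by
  set c := ∫ ξ in Set.Ioi 0, (1 - cos ξ) * ξ ^ (-1 - β)
  set F : ℝ → ℝ := fun ξ ↦ ∑ i ∈ s, ∑ j ∈ s,
    f (Y i) (Y j) * ((1 - cos ((u i - u j) * ξ)) * ξ ^ (-1 - β))
  have hint : ∀ i j, Integrable (fun ξ ↦ f (Y i) (Y j) *
      ((1 - cos ((u i - u j) * ξ)) * ξ ^ (-1 - β))) (volume.restrict (Set.Ioi 0)) :=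
    fun i j ↦ (integrableOn_one_sub_cos_mul_mul_rpow hβ0 hβ2 _).const_mul _
  have hintegral :
      ∫ ξ in Set.Ioi 0, F ξ = c * ∑ i ∈ s, ∑ j ∈ s, |u i - u j| ^ β * f (Y i) (Y j) := by
    simp only [F, integral_finsetSum _ fun i _ ↦ integrable_finsetSum _ fun j _ ↦ hint i j,
      integral_finsetSum _ fun j _ ↦ hint _ j, MeasureTheory.integral_const_mul,
      integral_one_sub_cos_mul_mul_rpow hβ0, mul_sum]
    exact sum_congr rfl fun _ _ ↦ sum_congr rfl fun _ _ ↦ by ring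
  have hF : ∀ ξ ∈ Set.Ioi (0 : ℝ), F ξ ≤ 0 := fun ξ hξ ↦ by
    have hsum : ∑ i ∈ s, ∑ j ∈ s, f (Y i) (Y j) = 0 := by
      simpa [hY] using (f.apply_sum_smul_sum_smul s 1 1 Y).symm
    have hexpand : F ξ = -(f (∑ i ∈ s, cos (u i * ξ) • Y i) (∑ j ∈ s, cos (u j * ξ) • Y j) +
        f (∑ i ∈ s, sin (u i * ξ) • Y i) (∑ j ∈ s, sin (u j * ξ) • Y j)) * ξ ^ (-1 - β) := by
      rw [f.apply_sum_smul_sum_smul, f.apply_sum_smul_sum_smul, ← zero_sub, ← hsum,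
        ← sum_add_distrib, ← sum_sub_distrib, sum_mul]
      refine sum_congr rfl fun i _ ↦ ?_
      rw [← sum_add_distrib, ← sum_sub_distrib, sum_mul]
      refine sum_congr rfl fun j _ ↦ ?_
      rw [sub_mul (u i), cos_sub]
      ring
    rw [hexpand]
    exact mul_nonpos_of_nonpos_of_nonneg (neg_nonpos.2 (add_nonneg (hf.nonneg _) (hf.nonneg _)))
      (rpow_nonneg (le_of_lt hξ) _)
  have hnonpos : ∫ ξ in Set.Ioi 0, F ξ ≤ 0 := setIntegral_nonpos measurableSet_Ioi hF
  rw [hintegral] at hnonpos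
  exact nonpos_of_mul_nonpos_right hnonpos (integral_one_sub_cos_mul_rpow_pos hβ0 hβ2)

end ConditionallyNegativeDefinite

section Weights

variable {α : ℝ}

lemma integral_sub_rpow (hα : -1 < α) (a b c : ℝ) :
    ∫ s in a..b, (s - c) ^ α = ((b - c) ^ (α + 1) - (a - c) ^ (α + 1)) / (α + 1) := by
  rw [intervalIntegral.integral_comp_sub_right (· ^ α) c, integral_rpow (Or.inl hα)]

lemma integral_rpow_sub_div_Gamma (hα : 0 < α) (s c d : ℝ) :
    ∫ θ in c..d, (s - θ) ^ (α - 1) / Gamma α = ((s - c) ^ α - (s - d) ^ α) / (Gamma α * α) := by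
  rw [intervalIntegral.integral_div, intervalIntegral.integral_comp_sub_left (· ^ (α - 1)) s,
    integral_rpow (Or.inl (by linarith)), sub_add_cancel, div_div, mul_comm α]

lemma integral_integral_rpow_sub_div_Gamma (hα : 0 < α) (a b c d : ℝ) :
    ∫ s in a..b, ∫ θ in c..d, (s - θ) ^ (α - 1) / Gamma α =
      ((b - c) ^ (α + 1) - (a - c) ^ (α + 1) - (b - d) ^ (α + 1) + (a - d) ^ (α + 1)) /
        (Gamma α * α * (α + 1)) := by
  have hint : ∀ x, IntervalIntegrable (fun s : ℝ ↦ (s - x) ^ α) volume a b := fun x ↦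
    (continuous_id.sub continuous_const).rpow_const (fun _ ↦ Or.inr hα.le) |>.intervalIntegrable _ _
  simp only [integral_rpow_sub_div_Gamma hα]
  rw [intervalIntegral.integral_div, intervalIntegral.integral_sub (hint c) (hint d),
    integral_sub_rpow (by linarith), integral_sub_rpow (by linarith)]
  have : Gamma α * α ≠ 0 := (mul_pos (Gamma_pos_of_pos hα) hα).ne'
  field_simp
  ring

lemma integral_integral_rpow_sub_div_Gamma_self (hα : 0 < α) (a b : ℝ) :
    ∫ s in a..b, ∫ θ in a..s, (s - θ) ^ (α - 1) / Gamma α =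
      (b - a) ^ (α + 1) / (Gamma α * α * (α + 1)) := by
  simp only [integral_rpow_sub_div_Gamma hα, sub_self, zero_rpow hα.ne', sub_zero]
  rw [intervalIntegral.integral_div, integral_sub_rpow (by linarith), sub_self,
    zero_rpow (by linarith), sub_zero, div_div, mul_comm (α + 1)]

/-- `k_n k_p w_{np}`: the product-integration weight before normalisation by the step sizes. -/
noncomputable def productWeight (α : ℝ) (t : ℕ → ℝ) (n p : ℕ) : ℝ :=
  ∫ s in t (n - 1)..t n, ∫ θ in t (p - 1)..min s (t p), (s - θ) ^ (α - 1) / Gamma α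

def mixedDiff (Φ : ℕ → ℕ → ℝ) (n p : ℕ) : ℝ :=
  Φ n (p - 1) + Φ (n - 1) p - Φ (n - 1) (p - 1) - Φ n p

lemma mixedDiff_comm {Φ : ℕ → ℕ → ℝ} (hΦ : ∀ i j, Φ i j = Φ j i) (n p : ℕ) :
    mixedDiff Φ n p = mixedDiff Φ p n := by
  simp only [mixedDiff, hΦ n, hΦ (n - 1)]
  ring

variable {t : ℕ → ℝ}

lemma mul_productWeight_of_lt (hα : 0 < α) (ht : Monotone t) {n p : ℕ} (hpn : p < n) :
    Gamma α * α * (α + 1) * productWeight α t n p =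
      mixedDiff (fun i j ↦ |t i - t j| ^ (α + 1)) n p := by
  have hp : t p ≤ t (n - 1) := ht (by omega)
  have hn : t (n - 1) ≤ t n := ht (by omega)
  have hp' : t (p - 1) ≤ t p := ht (by omega)
  have hmin : productWeight α t n p =
      ∫ s in t (n - 1)..t n, ∫ θ in t (p - 1)..t p, (s - θ) ^ (α - 1) / Gamma α := by
    refine intervalIntegral.integral_congr fun s hs ↦ ?_
    rw [Set.uIcc_of_le hn] at hs
    simp only [min_eq_right (hp.trans hs.1)]
  rw [hmin, integral_integral_rpow_sub_div_Gamma hα, mixedDiff,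
    abs_of_nonneg (by linarith : 0 ≤ t n - t (p - 1)),
    abs_of_nonneg (by linarith : 0 ≤ t (n - 1) - t p),
    abs_of_nonneg (by linarith : 0 ≤ t (n - 1) - t (p - 1)),
    abs_of_nonneg (by linarith : 0 ≤ t n - t p)]
  have : Gamma α * α * (α + 1) ≠ 0 := by
    have := Gamma_pos_of_pos hα; positivity
  field_simp
  ring

lemma mul_productWeight_self (hα : 0 < α) (ht : Monotone t) (n : ℕ) :
    2 * (Gamma α * α * (α + 1)) * productWeight α t n n =
      mixedDiff (fun i j ↦ |t i - t j| ^ (α + 1)) n n := by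
  have hn : t (n - 1) ≤ t n := ht (by omega)
  have hmin : productWeight α t n n =
      ∫ s in t (n - 1)..t n, ∫ θ in t (n - 1)..s, (s - θ) ^ (α - 1) / Gamma α := by
    refine intervalIntegral.integral_congr fun s hs ↦ ?_
    rw [Set.uIcc_of_le hn] at hs
    simp only [min_eq_left hs.2]
  simp only [hmin, integral_integral_rpow_sub_div_Gamma_self hα, mixedDiff, sub_self, abs_zero,
    zero_rpow (by linarith : α + 1 ≠ 0), abs_sub_comm (t (n - 1)),
    abs_of_nonneg (sub_nonneg.2 hn)]
  have : Gamma α * α * (α + 1) ≠ 0 := by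
    have := Gamma_pos_of_pos hα; positivity
  field_simp
  ring

end Weights

section FinsetSums

lemma sum_range_sum_range_eq_sum_lt {M : Type*} [AddCommMonoid M] (F : ℕ → ℕ → M) (L : ℕ) :
    ∑ n ∈ range L, ∑ p ∈ range L, F n p =
      ∑ n ∈ range L, (∑ p ∈ range n, (F n p + F p n) + F n n) := by
  induction L with
  | zero => simp
  | succ L ih =>
    conv_rhs => rw [sum_range_succ, ← ih]
    simp only [sum_range_succ, sum_add_distrib]
    abel

lemma sum_Icc_one_eq_sum_range {M : Type*} [AddCommMonoid M] {g : ℕ → M} (hg : g 0 = 0) (n : ℕ) :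
    ∑ i ∈ Icc 1 n, g i = ∑ i ∈ range (n + 1), g i :=
  sum_subset (fun _ hi ↦ mem_range.2 (Nat.lt_succ_of_le (mem_Icc.1 hi).2)) fun i hi hi' ↦ by
    obtain rfl : i = 0 := by simp only [mem_range, mem_Icc] at hi hi'; omega
    exact hg

variable {R M : Type*} [Ring R] [AddCommGroup M] [Module R M]

lemma sum_range_sub_smul_eq_sum_range_smul_sub (c : ℕ → R) {a : ℕ → M} {L : ℕ} (ha0 : a 0 = 0)
    (haL : a L = 0) :
    ∑ p ∈ range L, (c (p - 1) - c p) • a p = ∑ p ∈ range L, c p • (a (p + 1) - a p) := by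
  simp only [sub_smul, smul_sub, sum_sub_distrib]
  congr 1
  cases L with
  | zero => simp
  | succ L =>
    rw [sum_range_succ', sum_range_succ, ha0, haL]
    simp

end FinsetSums

section DiscretePositivity

variable {M : Type*} [AddCommGroup M] [Module ℝ M]

lemma sum_sum_mixedDiff_mul (Φ : ℕ → ℕ → ℝ) (f : LinearMap.BilinForm ℝ M) {a : ℕ → M} {L : ℕ}
    (ha0 : a 0 = 0) (haL : a L = 0) :
    ∑ n ∈ range L, ∑ p ∈ range L, mixedDiff Φ n p * f (a p) (a n) =
      -∑ n ∈ range L, ∑ p ∈ range L, Φ n p * f (a (p + 1) - a p) (a (n + 1) - a n) := by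
  have hp : ∀ n, ∑ p ∈ range L, mixedDiff Φ n p • a p =
      ∑ p ∈ range L, (Φ n p - Φ (n - 1) p) • (a (p + 1) - a p) := fun n ↦ by
    rw [← sum_range_sub_smul_eq_sum_range_smul_sub _ ha0 haL]
    exact sum_congr rfl fun p _ ↦ by rw [mixedDiff]; congr 1; ring
  have hn : ∀ p, ∑ n ∈ range L, (Φ n p - Φ (n - 1) p) • a n =
      ∑ n ∈ range L, (-Φ n p) • (a (n + 1) - a n) := fun p ↦ by
    rw [← sum_range_sub_smul_eq_sum_range_smul_sub _ ha0 haL]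
    exact sum_congr rfl fun n _ ↦ by congr 1; ring
  calc ∑ n ∈ range L, ∑ p ∈ range L, mixedDiff Φ n p * f (a p) (a n)
      = ∑ n ∈ range L, f (∑ p ∈ range L, mixedDiff Φ n p • a p) (a n) := by
        simp only [map_sum, map_smul, LinearMap.sum_apply, LinearMap.smul_apply, smul_eq_mul]
    _ = ∑ p ∈ range L, f (a (p + 1) - a p) (∑ n ∈ range L, (Φ n p - Φ (n - 1) p) • a n) := by
        simp only [hp, map_sum, map_smul, LinearMap.sum_apply, LinearMap.smul_apply, smul_eq_mul]
        exact sum_comm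
    _ = _ := by
        simp only [hn, map_sum, map_smul, smul_eq_mul, neg_mul, sum_neg_distrib]
        rw [sum_comm]

theorem sum_sum_productWeight_mul_nonneg {α : ℝ} (hα0 : 0 < α) (hα1 : α < 1) {t : ℕ → ℝ}
    (ht : Monotone t) {f : LinearMap.BilinForm ℝ M} (hf : f.IsPosSemidef) {a : ℕ → M} {L : ℕ}
    (ha0 : a 0 = 0) (haL : a L = 0) :
    0 ≤ ∑ n ∈ range L, ∑ p ∈ range (n + 1), productWeight α t n p * f (a p) (a n) := by
  set Φ : ℕ → ℕ → ℝ := fun i j ↦ |t i - t j| ^ (α + 1)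
  have hΦ : ∀ i j, Φ i j = Φ j i := fun i j ↦ by simp only [Φ, abs_sub_comm]
  have hc : 0 < 2 * (Gamma α * α * (α + 1)) := by
    have := Gamma_pos_of_pos hα0; positivity
  have hsquare : 2 * (Gamma α * α * (α + 1)) *
      ∑ n ∈ range L, ∑ p ∈ range (n + 1), productWeight α t n p * f (a p) (a n) =
        ∑ n ∈ range L, ∑ p ∈ range L, mixedDiff Φ n p * f (a p) (a n) := by
    rw [sum_range_sum_range_eq_sum_lt, mul_sum]
    refine sum_congr rfl fun n _ ↦ ?_
    rw [sum_range_succ, mul_add, mul_sum, ← mul_productWeight_self hα0 ht]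
    congr 1
    · refine sum_congr rfl fun p hp ↦ ?_
      rw [mixedDiff_comm hΦ p, hf.isSymm.eq (a n),
        ← mul_productWeight_of_lt hα0 ht (mem_range.1 hp)]
      ring
    · ring
  have hdiff : ∑ p ∈ range L, (a (p + 1) - a p) = 0 := by
    rw [sum_range_sub, ha0, haL, sub_zero]
  have hcnd : ∑ n ∈ range L, ∑ p ∈ range L, Φ n p * f (a (p + 1) - a p) (a (n + 1) - a n) ≤ 0 :=
    le_of_eq_of_le (sum_congr rfl fun n _ ↦ sum_congr rfl fun p _ ↦ by rw [hf.isSymm.eq])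
      (sum_sum_abs_sub_rpow_mul_nonpos (by linarith) (by linarith) hf.isNonneg _ t _ hdiff)
  rw [sum_sum_mixedDiff_mul Φ f ha0 haL] at hsquare
  exact (mul_nonneg_iff_of_pos_left hc).1 (hsquare ▸ neg_nonneg.2 hcnd)

end DiscretePositivity

theorem stmt_5_general {H : Type*} [NormedAddCommGroup H] [InnerProductSpace ℝ H]
    (α : ℝ) (hα : 0 < α ∧ α < 1) (N : ℕ)
    (t : ℕ → ℝ) (hmono : StrictMono t)
    (w : ℕ → ℕ → ℝ)
    (hw : ∀ n p, w n p = (1 / ((t n - t (n - 1)) * (t p - t (p - 1)))) *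
      ∫ s in (t (n - 1))..(t n),
        ∫ θ in (t (p - 1))..(min s (t p)), (s - θ) ^ (α - 1) / Real.Gamma α)
    (B : H →L[ℝ] H)
    (hBsa : ∀ x y : H, (inner ℝ (B x) y : ℝ) = inner ℝ x (B y))
    (hBpos : ∀ x : H, (0:ℝ) ≤ inner ℝ (B x) x)
    (W : ℕ → H) :
    0 ≤ ∑ n ∈ Finset.Icc 1 N, (t n - t (n - 1)) *
      (inner ℝ (∑ p ∈ Finset.Icc 1 n, ((t p - t (p - 1)) * w n p) • B (W p)) (W n) : ℝ) := by
  let f : LinearMap.BilinForm ℝ H := innerₗ H ∘ₗ (B : H →ₗ[ℝ] H)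
  have hf : f.IsPosSemidef :=
    ⟨⟨fun x y ↦ (hBsa x y).trans (real_inner_comm _ _)⟩, ⟨hBpos⟩⟩
  let a : ℕ → H := fun p ↦ if p ∈ Icc 1 N then W p else 0
  have ha0 : a 0 = 0 := by simp [a]
  have hk : ∀ m, 1 ≤ m → t m - t (m - 1) ≠ 0 := fun m hm ↦ sub_ne_zero.2 (hmono (by omega)).ne'
  have hterm : ∀ n ∈ Icc 1 N, (t n - t (n - 1)) *
      inner ℝ (∑ p ∈ Icc 1 n, ((t p - t (p - 1)) * w n p) • B (W p)) (W n) =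
        ∑ p ∈ range (n + 1), productWeight α t n p * f (a p) (a n) := fun n hn ↦ by
    rw [← sum_Icc_one_eq_sum_range (by simp [ha0]), sum_inner, mul_sum]
    refine sum_congr rfl fun p hp ↦ ?_
    simp only [mem_Icc] at hn hp
    simp only [f, a, mem_Icc, if_pos hn, if_pos (⟨hp.1, hp.2.trans hn.2⟩ : 1 ≤ p ∧ p ≤ N),
      LinearMap.comp_apply, innerₗ_apply_apply, ContinuousLinearMap.coe_coe, real_inner_smul_left,
      hw, productWeight]
    field_simp [hk n hn.1, hk p hp.1]
  rw [sum_congr rfl hterm, sum_Icc_one_eq_sum_range (by simp [ha0]) N]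
  exact sum_sum_productWeight_mul_nonneg hα.1 hα.2 hmono.monotone hf ha0 (by simp [a])

/-- Discrete positivity of the memory quadrature: with `B` self-adjoint
positive semidefinite and `w_{np}` the product-integration weights of `ω_α`,
`k₁ (I^{(α)} B V^{1/2}, V¹) + Σ_{n=2}^N kₙ (I^{(α)} B V^{n-1/2}, V^{n-1/2}) ≥ 0`. -/
theorem stmt_5 {H : Type*} [NormedAddCommGroup H] [InnerProductSpace ℝ H]
    (α : ℝ) (hα : 0 < α ∧ α < 1) (N : ℕ) (hN : 1 ≤ N)
    (t : ℕ → ℝ) (ht0 : t 0 = 0) (hmono : StrictMono t)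
    (w : ℕ → ℕ → ℝ)
    (hw : ∀ n p, w n p = (1 / ((t n - t (n - 1)) * (t p - t (p - 1)))) *
      ∫ s in (t (n - 1))..(t n),
        ∫ θ in (t (p - 1))..(min s (t p)), (s - θ) ^ (α - 1) / Real.Gamma α)
    (B : H →L[ℝ] H)
    (hBsa : ∀ x y : H, (inner ℝ (B x) y : ℝ) = inner ℝ x (B y))
    (hBpos : ∀ x : H, (0:ℝ) ≤ inner ℝ (B x) x)
    (V W : ℕ → H) (hW1 : W 1 = V 1)
    (hWn : ∀ p, 2 ≤ p → W p = (2:ℝ)⁻¹ • (V p + V (p - 1))) :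
    0 ≤ ∑ n ∈ Finset.Icc 1 N, (t n - t (n - 1)) *
      (inner ℝ (∑ p ∈ Finset.Icc 1 n, ((t p - t (p - 1)) * w n p) • B (W p)) (W n) : ℝ) :=
  stmt_5_general α hα N t hmono w hw B hBsa hBpos W
end

section
/- Let 0 < α < 1, γ ≥ 1, and consider the graded mesh t_n = (nk)^γ for 0 ≤ n ≤ N with k = T^{1/γ}/N. Then Σ_{n=2}^N t_n^{α − 2/γ} k_n ≤ C · { k^{γ(α+1)−2}/(2/γ − (α+1)) if γ < 2/(α+1); log(t_N/t_1) if γ = 2/(α+1); t_N^{(α+1)−2/γ}/((α+1) − 2/γ) if γ > 2/(α+1) }, where k_n = t_n − t_{n−1} and C depends only on γ and α. -/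
open Finset Real

/-! With `β = γ(α+1) - 2`, Bernoulli's inequality bounds the increment `tₙ - tₙ₋₁` of the mesh
by `γ k^γ n^(γ-1)`, so the sum is at most `γ k^β ∑_{n=2}^N n^(β-1)`. For `β ≤ 1` the summands
decrease, so this sum is at most `∫₁^N x^(β-1) dx`, which is bounded by `1/(-β)`, `log N` or
`N^β/β` according to the sign of `β`; for `β > 1` it is crudely at most
`N^β = β · N^β/β`, and `β < 2γ`. -/

lemma rpow_sub_rpow_sub_one_le {p x : ℝ} (hp : 1 ≤ p) (hx : 1 ≤ x) :
    x ^ p - (x - 1) ^ p ≤ p * x ^ (p - 1) := by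
  have hx0 : 0 < x := by linarith
  have hbern : 1 + p * -x⁻¹ ≤ (1 + -x⁻¹) ^ p :=
    one_add_mul_self_le_rpow_one_add (neg_le_neg (inv_le_one_of_one_le₀ hx)) hp
  have hfac : (x - 1) ^ p = (1 + -x⁻¹) ^ p * x ^ p := by
    rw [← mul_rpow (by simpa [← sub_eq_add_neg] using inv_le_one_of_one_le₀ hx) hx0.le]
    congr 1
    field_simp
    ring
  rw [hfac, rpow_sub_one hx0.ne']
  nlinarith [mul_le_mul_of_nonneg_right hbern (rpow_nonneg hx0.le p),
    show x ^ p / x = x ^ p * x⁻¹ from div_eq_mul_inv _ _]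

lemma graded_mesh_term_le {α γ k x : ℝ} (hγ : 1 ≤ γ) (hk : 0 < k) (hx : 1 ≤ x) :
    ((x * k) ^ γ) ^ (α - 2 / γ) * ((x * k) ^ γ - ((x - 1) * k) ^ γ)
      ≤ γ * k ^ (γ * (α + 1) - 2) * x ^ (γ * (α + 1) - 2 - 1) := by
  have hx0 : 0 < x := by linarith
  have hexp : γ * (α - 2 / γ) = γ * α - 2 := by field_simp
  rw [← rpow_mul (by positivity), hexp, mul_rpow hx0.le hk.le, mul_rpow hx0.le hk.le,
    mul_rpow (by linarith) hk.le, show γ * (α + 1) - 2 = (γ * α - 2) + γ by ring,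
    show γ * α - 2 + γ - 1 = (γ * α - 2) + (γ - 1) by ring, rpow_add hk, rpow_add hx0]
  calc _ = x ^ (γ * α - 2) * k ^ (γ * α - 2) * k ^ γ * (x ^ γ - (x - 1) ^ γ) := by ring
    _ ≤ x ^ (γ * α - 2) * k ^ (γ * α - 2) * k ^ γ * (γ * x ^ (γ - 1)) := by
      gcongr; exact rpow_sub_rpow_sub_one_le hγ hx
    _ = _ := by ring

lemma sum_Icc_rpow_le_integral {p : ℝ} (hp : p ≤ 0) {N : ℕ} (hN : 1 ≤ N) :
    ∑ n ∈ Icc 2 N, (n : ℝ) ^ p ≤ ∫ x in (1 : ℝ)..N, x ^ p := by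
  have hanti : AntitoneOn (fun x : ℝ ↦ x ^ p) (Set.Icc (1 : ℕ) N) :=
    (antitoneOn_rpow_Ioi_of_exponent_nonpos hp).mono fun x hx ↦
      lt_of_lt_of_le one_pos (by exact_mod_cast hx.1)
  rw [← Ico_add_one_right_eq_Icc, show 2 = 1 + 1 from rfl, ← sum_Ico_add']
  simpa using hanti.sum_le_integral_Ico hN

lemma integral_one_rpow_sub_one {β N : ℝ} (hβ : β ≠ 0) (hN : 1 ≤ N) :
    ∫ x in (1 : ℝ)..N, x ^ (β - 1) = (N ^ β - 1) / β := by
  rw [integral_rpow (Or.inr ⟨by contrapose! hβ; linarith, ?_⟩)]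
  · simp
  · rw [Set.uIcc_of_le hN]; exact fun h ↦ by linarith [h.1]

lemma sum_Icc_rpow_sub_one_le_of_neg {β : ℝ} (hβ : β < 0) {N : ℕ} (hN : 1 ≤ N) :
    ∑ n ∈ Icc 2 N, (n : ℝ) ^ (β - 1) ≤ 1 / -β := by
  calc _ ≤ ((N : ℝ) ^ β - 1) / β := by
        rw [← integral_one_rpow_sub_one hβ.ne (by exact_mod_cast hN)]
        exact sum_Icc_rpow_le_integral (by linarith) hN
    _ = (1 - (N : ℝ) ^ β) / -β := by rw [div_neg, ← neg_div, neg_sub]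
    _ ≤ 1 / -β := by
      gcongr
      · linarith
      · linarith [rpow_nonneg (Nat.cast_nonneg N) β]

lemma sum_Icc_inv_le_log {N : ℕ} (hN : 1 ≤ N) : ∑ n ∈ Icc 2 N, (n : ℝ)⁻¹ ≤ log N := by
  have hN' : (1 : ℝ) ≤ N := by exact_mod_cast hN
  calc _ = ∑ n ∈ Icc 2 N, (n : ℝ) ^ (-1 : ℝ) := by simp_rw [rpow_neg_one]
    _ ≤ ∫ x in (1 : ℝ)..N, x ^ (-1 : ℝ) := sum_Icc_rpow_le_integral (by norm_num) hN
    _ = log N := by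
      rw [intervalIntegral.integral_congr (g := fun x ↦ x⁻¹) fun x _ ↦ rpow_neg_one x,
        integral_inv_of_pos one_pos (by linarith), div_one]

lemma sum_Icc_rpow_sub_one_le_of_pos {β : ℝ} (hβ : 0 < β) {N : ℕ} (hN : 1 ≤ N) :
    ∑ n ∈ Icc 2 N, (n : ℝ) ^ (β - 1) ≤ max 1 β * N ^ β / β := by
  rcases le_or_gt β 1 with hβ1 | hβ1
  · calc _ ≤ ((N : ℝ) ^ β - 1) / β := by
          rw [← integral_one_rpow_sub_one hβ.ne' (by exact_mod_cast hN)]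
          exact sum_Icc_rpow_le_integral (by linarith) hN
      _ ≤ max 1 β * N ^ β / β := by
          rw [max_eq_left hβ1, one_mul]; gcongr; linarith
  · calc _ ≤ ∑ _n ∈ Icc 2 N, (N : ℝ) ^ (β - 1) := by
          gcongr with n hn
          exact_mod_cast (mem_Icc.mp hn).2
      _ ≤ N * (N : ℝ) ^ (β - 1) := by
          rw [sum_const, nsmul_eq_mul, Nat.card_Icc]
          gcongr
          exact_mod_cast (by omega : N + 1 - 2 ≤ N)
      _ = max 1 β * N ^ β / β := by
          rw [max_eq_right hβ1.le, mul_div_cancel_left₀ _ hβ.ne', mul_comm,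
            rpow_sub_one (by positivity), div_mul_cancel₀ _ (by positivity)]

noncomputable def rpowSumBound (β N : ℝ) : ℝ :=
  if β < 0 then 1 / -β else if β = 0 then log N else N ^ β / β

lemma rpowSumBound_nonneg (β : ℝ) {N : ℝ} (hN : 1 ≤ N) : 0 ≤ rpowSumBound β N := by
  unfold rpowSumBound
  split_ifs with hneg hzero
  · exact div_nonneg zero_le_one (by linarith)
  · exact log_nonneg hN
  · exact div_nonneg (by positivity) (not_lt.mp hneg)

lemma sum_Icc_rpow_sub_one_le_rpowSumBound (β : ℝ) {N : ℕ} (hN : 1 ≤ N) :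
    ∑ n ∈ Icc 2 N, (n : ℝ) ^ (β - 1) ≤ max 1 β * rpowSumBound β N := by
  unfold rpowSumBound
  split_ifs with hneg hzero
  · rw [max_eq_left (by linarith), one_mul]
    exact sum_Icc_rpow_sub_one_le_of_neg hneg hN
  · rw [hzero, max_eq_left zero_le_one, one_mul, zero_sub]
    simp_rw [rpow_neg_one]
    exact sum_Icc_inv_le_log hN
  · rw [← mul_div_assoc]
    exact sum_Icc_rpow_sub_one_le_of_pos (lt_of_le_of_ne (not_lt.mp hneg) (Ne.symm hzero)) hN

lemma graded_mesh_regime_eq {α γ k N : ℝ} (hα : 0 < α + 1) (hγ : 0 < γ) (hk : 0 < k)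
    (hN : 0 < N) :
    (if γ < 2 / (α + 1) then k ^ (γ * (α + 1) - 2) / (2 / γ - (α + 1))
      else if γ = 2 / (α + 1) then log ((N * k) ^ γ / k ^ γ)
      else ((N * k) ^ γ) ^ ((α + 1) - 2 / γ) / ((α + 1) - 2 / γ))
      = γ * k ^ (γ * (α + 1) - 2) * rpowSumBound (γ * (α + 1) - 2) N := by
  have hlt : γ < 2 / (α + 1) ↔ γ * (α + 1) - 2 < 0 := by rw [lt_div_iff₀ hα, sub_neg]
  have heq : γ = 2 / (α + 1) ↔ γ * (α + 1) - 2 = 0 := by rw [eq_div_iff hα.ne', sub_eq_zero]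
  simp only [rpowSumBound, hlt, heq]
  split_ifs with hneg hzero
  · rw [show 2 / γ - (α + 1) = -(γ * (α + 1) - 2) / γ by field_simp; ring, div_div_eq_mul_div]
    ring
  · rw [hzero, rpow_zero, mul_rpow hN.le hk.le, mul_div_cancel_right₀ _ (by positivity),
      log_rpow hN]
    ring
  · rw [← rpow_mul (by positivity), mul_rpow hN.le hk.le]
    field_simp

/-- For the graded mesh `tₙ = (nk)^γ`, `k = T^{1/γ}/N`, the sum
`Σ_{n=2}^N tₙ^{α-2/γ} kₙ` is bounded according to the three regimes of `γ`
relative to `2/(α+1)` (estimate (4.18)), with `C` depending only on `γ` and `α`. -/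
theorem stmt_12 (α γ T : ℝ) (hα : 0 < α ∧ α < 1) (hγ : 1 ≤ γ) (hT : 0 < T) :
    ∃ C > 0, ∀ N : ℕ, 2 ≤ N →
      ∑ n ∈ Finset.Icc 2 N,
          (((n : ℝ) * (T ^ (1/γ) / N)) ^ γ) ^ (α - 2/γ) *
            ((((n : ℝ)) * (T ^ (1/γ) / N)) ^ γ - (((n : ℝ) - 1) * (T ^ (1/γ) / N)) ^ γ)
        ≤ C * (if γ < 2 / (α + 1) then
                 (T ^ (1/γ) / N) ^ (γ * (α + 1) - 2) / (2/γ - (α + 1))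
               else if γ = 2 / (α + 1) then
                 Real.log ((((N : ℝ) * (T ^ (1/γ) / N)) ^ γ) / ((T ^ (1/γ) / N) ^ γ))
               else
                 (((N : ℝ) * (T ^ (1/γ) / N)) ^ γ) ^ ((α + 1) - 2/γ) / ((α + 1) - 2/γ)) := by
  obtain ⟨hα0, hα1⟩ := hα
  refine ⟨2 * γ, by linarith, fun N hN ↦ ?_⟩
  have hN1 : 1 ≤ N := by omega
  have hN0 : (0 : ℝ) < N := by exact_mod_cast hN1
  set k := T ^ (1 / γ) / N
  have hk : 0 < k := by positivity
  rw [graded_mesh_regime_eq (by linarith) (by linarith) hk hN0]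
  refine (sum_le_sum fun n hn ↦ graded_mesh_term_le hγ hk
    (by exact_mod_cast (one_le_two.trans (mem_Icc.mp hn).1))).trans ?_
  rw [← mul_sum]
  set β := γ * (α + 1) - 2
  have hβ : max 1 β ≤ 2 * γ := max_le (by linarith) (by nlinarith)
  have hF := rpowSumBound_nonneg β (by exact_mod_cast hN1 : (1 : ℝ) ≤ N)
  calc _ ≤ γ * k ^ β * (max 1 β * rpowSumBound β N) := by
        gcongr; exact sum_Icc_rpow_sub_one_le_rpowSumBound β hN1
    _ ≤ γ * k ^ β * (2 * γ * rpowSumBound β N) := by gcongr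
    _ = _ := by ring
end

section
/- Let 0 < α < 1, κ ≥ 0, and suppose ‖v'(t)‖ ≤ C and ‖v''(t)‖ ≤ C t^{α−1} on (0,T]. With mesh satisfying k_n ≤ C_γ k, the quantities R_3^{1/2} = −κ( v(t_1) − (1/k_1)∫_0^{t_1} v(t)dt ) and R_3^{n−1/2} = −κ( (v(t_n)+v(t_{n−1}))/2 − (1/k_n)∫_{t_{n−1}}^{t_n} v(t)dt ) for n ≥ 2 satisfy Σ_{n=1}^N k_n ‖R_3^{n−1/2}‖ ≤ C κ k² (1 + t_N^α), with C depending only on α, γ, T. -/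
/-!
On the first interval `v` is only known to be Lipschitz (its second derivative may blow up at `0`),
so the left-endpoint defect is only bounded by `C k₁`. On `[tₙ₋₁, tₙ]` with `n ≥ 2` the
trapezoid defect is bounded by `kₙ` times the oscillation of `v'`, and integrating
`‖v''(u)‖ ≤ C u^(α-1)` bounds that oscillation by `C (tₙ^α - tₙ₋₁^α) / α`. Weighting by `kₙ ≤ Cγ k`
and telescoping the sum of `tₙ^α - tₙ₋₁^α` gives the bound.
-/

open MeasureTheory intervalIntegral Finset Real

theorem Finset.sum_Icc_two_sub_pred {M : Type*} [AddCommGroup M] (f : ℕ → M) {N : ℕ}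
    (hN : 1 ≤ N) : ∑ n ∈ Icc 2 N, (f n - f (n - 1)) = f N - f 1 := by
  rw [← Finset.Ico_add_one_right_eq_Icc, ← Finset.sum_Ico_sub f hN]
  simpa using (Finset.sum_Ico_add' (fun n => f n - f (n - 1)) 1 N 1).symm

section

variable {H : Type*} [NormedAddCommGroup H] [NormedSpace ℝ H]

theorem norm_sub_le_sub_of_norm_hasDerivAt_le {f f' : ℝ → H} {g g' : ℝ → ℝ} {x y : ℝ}
    (hxy : x ≤ y) (hf : ∀ u ∈ Set.Icc x y, HasDerivAt f (f' u) u)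
    (hg : ∀ u ∈ Set.Icc x y, HasDerivAt g (g' u) u) (hbound : ∀ u ∈ Set.Icc x y, ‖f' u‖ ≤ g' u) :
    ‖f y - f x‖ ≤ g y - g x :=
  image_norm_le_of_norm_deriv_right_le_deriv_boundary' (f := fun u => f u - f x)
    (B := fun u => g u - g x)
    (fun u hu => ((hf u hu).continuousAt.sub continuousAt_const).continuousWithinAt)
    (fun u hu => ((hf u (Set.Ico_subset_Icc_self hu)).sub_const (f x)).hasDerivWithinAt)
    (by simp)
    (fun u hu => ((hg u hu).continuousAt.sub continuousAt_const).continuousWithinAt)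
    (fun u hu => ((hg u (Set.Ico_subset_Icc_self hu)).sub_const (g x)).hasDerivWithinAt)
    (fun u hu => hbound u (Set.Ico_subset_Icc_self hu)) (Set.right_mem_Icc.2 hxy)

theorem norm_sub_le_of_norm_hasDerivAt_le_rpow {f f' : ℝ → H} {α C x y : ℝ} (hα : α ≠ 0)
    (hx : 0 < x) (hxy : x ≤ y) (hf : ∀ u ∈ Set.Icc x y, HasDerivAt f (f' u) u)
    (hbound : ∀ u ∈ Set.Icc x y, ‖f' u‖ ≤ C * u ^ (α - 1)) :
    ‖f y - f x‖ ≤ C / α * (y ^ α - x ^ α) := by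
  have hg : ∀ u ∈ Set.Icc x y, HasDerivAt (fun u => C / α * u ^ α) (C * u ^ (α - 1)) u := by
    intro u hu
    refine ((hasDerivAt_rpow_const (Or.inl (hx.trans_le hu.1).ne')).const_mul (C / α)).congr_deriv
      ?_
    field_simp
  rw [mul_sub]
  exact norm_sub_le_sub_of_norm_hasDerivAt_le hxy hf hg hbound

theorem norm_sub_le_of_mem_Icc_of_norm_hasDerivAt_le_rpow {f f' : ℝ → H} {α C a b u w : ℝ}
    (hα : 0 < α) (hC : 0 ≤ C) (ha : 0 < a) (hf : ∀ u ∈ Set.Icc a b, HasDerivAt f (f' u) u)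
    (hbound : ∀ u ∈ Set.Icc a b, ‖f' u‖ ≤ C * u ^ (α - 1))
    (hu : u ∈ Set.Icc a b) (hw : w ∈ Set.Icc a b) :
    ‖f u - f w‖ ≤ C / α * (b ^ α - a ^ α) := by
  wlog huw : w ≤ u generalizing u w
  · rw [norm_sub_rev]; exact this hw hu (le_of_not_ge huw)
  have hsub : Set.Icc w u ⊆ Set.Icc a b := Set.Icc_subset_Icc hw.1 hu.2
  calc ‖f u - f w‖ ≤ C / α * (u ^ α - w ^ α) :=
        norm_sub_le_of_norm_hasDerivAt_le_rpow hα.ne' (ha.trans_le hw.1) huw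
          (fun v hv => hf v (hsub hv)) (fun v hv => hbound v (hsub hv))
    _ ≤ C / α * (b ^ α - a ^ α) := by
        gcongr
        exacts [(ha.trans_le (hw.1.trans huw)).le, hu.2, hw.1]

theorem intervalIntegrable_of_hasDerivAt_of_norm_le {f f' : ℝ → H} {a b C : ℝ} (hab : a ≤ b)
    (hf : ∀ u ∈ Set.Ioc a b, HasDerivAt f (f' u) u) (hbound : ∀ u ∈ Set.Ioc a b, ‖f' u‖ ≤ C) :
    IntervalIntegrable f volume a b := by
  have hbounded : ∀ u ∈ Set.Ioc a b, ‖f u‖ ≤ ‖f b‖ + C * (b - a) := by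
    intro u hu
    have hsub : Set.Icc u b ⊆ Set.Ioc a b := Set.Icc_subset_Ioc_iff hu.2 |>.2 ⟨hu.1, le_rfl⟩
    have hmv : ‖f b - f u‖ ≤ C * b - C * u :=
      norm_sub_le_sub_of_norm_hasDerivAt_le hu.2 (fun v hv => hf v (hsub hv))
        (fun v _ => (hasDerivAt_id v).const_mul C |>.congr_deriv (mul_one C))
        (fun v hv => hbound v (hsub hv))
    have := norm_sub_norm_le (f u) (f b)
    rw [norm_sub_rev] at this
    have hC : 0 ≤ C := (norm_nonneg _).trans (hbound b ⟨hu.1.trans_le hu.2, le_rfl⟩)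
    nlinarith [hu.1]
  rw [intervalIntegrable_iff_integrableOn_Ioc_of_le hab]
  refine IntegrableOn.of_bound measure_Ioc_lt_top ?_ _
    ((ae_restrict_mem measurableSet_Ioc).mono hbounded)
  exact ContinuousOn.aestronglyMeasurable (fun u hu => (hf u hu).continuousAt.continuousWithinAt)
    measurableSet_Ioc

theorem norm_sub_average_le [CompleteSpace H] {g : ℝ → H} {c : H} {a b M : ℝ} (hab : a < b)
    (hg : IntervalIntegrable g volume a b) (hM : ∀ s ∈ Set.Ioc a b, ‖c - g s‖ ≤ M) :
    ‖c - (b - a)⁻¹ • ∫ s in a..b, g s‖ ≤ M := by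
  have hba : 0 < b - a := sub_pos.2 hab
  have hrewrite : c - (b - a)⁻¹ • ∫ s in a..b, g s = (b - a)⁻¹ • ∫ s in a..b, (c - g s) := by
    rw [intervalIntegral.integral_sub intervalIntegrable_const hg, intervalIntegral.integral_const,
      smul_sub, smul_smul, inv_mul_cancel₀ hba.ne', one_smul]
  have hint : ‖∫ s in a..b, (c - g s)‖ ≤ M * |b - a| :=
    norm_integral_le_of_norm_le_const fun s hs => hM s (Set.uIoc_of_le hab.le ▸ hs)
  rw [abs_of_pos hba] at hint
  rw [hrewrite, norm_smul, norm_inv, Real.norm_eq_abs, abs_of_pos hba]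
  calc (b - a)⁻¹ * ‖∫ s in a..b, (c - g s)‖ ≤ (b - a)⁻¹ * (M * (b - a)) := by gcongr
    _ = M := by field_simp

theorem norm_sub_average_le_of_norm_hasDerivAt_le [CompleteSpace H] {f f' : ℝ → H} {a b C : ℝ}
    (hab : a < b) (hf : ∀ u ∈ Set.Ioc a b, HasDerivAt f (f' u) u)
    (hbound : ∀ u ∈ Set.Ioc a b, ‖f' u‖ ≤ C) :
    ‖f b - (b - a)⁻¹ • ∫ s in a..b, f s‖ ≤ C * (b - a) := by
  refine norm_sub_average_le hab (intervalIntegrable_of_hasDerivAt_of_norm_le hab.le hf hbound)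
    fun s hs => ?_
  have hsub : Set.Icc s b ⊆ Set.Ioc a b := Set.Icc_subset_Ioc_iff hs.2 |>.2 ⟨hs.1, le_rfl⟩
  have hC : 0 ≤ C := (norm_nonneg _).trans (hbound b ⟨hab, le_rfl⟩)
  calc ‖f b - f s‖ ≤ C * b - C * s :=
        norm_sub_le_sub_of_norm_hasDerivAt_le hs.2 (fun u hu => hf u (hsub hu))
          (fun u _ => (hasDerivAt_id u).const_mul C |>.congr_deriv (mul_one C))
          (fun u hu => hbound u (hsub hu))
    _ ≤ C * (b - a) := by nlinarith [hs.1]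

theorem norm_trapezoid_sub_average_le [CompleteSpace H] {f f' : ℝ → H} {a b I : ℝ} (hab : a < b)
    (hf : ∀ u ∈ Set.Icc a b, HasDerivAt f (f' u) u)
    (hosc : ∀ u ∈ Set.Icc a b, ‖f' u - f' ((a + b) / 2)‖ ≤ I) :
    ‖(2:ℝ)⁻¹ • (f b + f a) - (b - a)⁻¹ • ∫ s in a..b, f s‖ ≤ I * (b - a) := by
  set m := (a + b) / 2 with hm_def
  have hm : m ∈ Set.Icc a b := ⟨by linarith, by linarith⟩
  -- Both the trapezoid value and the mean are exact on affine functions, so only the deviation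
  -- `w` of `f` from its tangent at the midpoint contributes.
  set w : ℝ → H := fun s => f s - f m - (s - m) • f' m
  have hw : ∀ s ∈ Set.Icc a b, ‖w s‖ ≤ I * (b - a) / 2 := by
    intro s hs
    have hderiv : ∀ u ∈ Set.Icc a b, HasDerivWithinAt w (f' u - f' m) (Set.Icc a b) u :=
      fun u hu => (((hf u hu).sub_const (f m)).sub
        (((hasDerivAt_id u).sub_const m).smul_const (f' m) |>.congr_deriv (one_smul ℝ _)))
        |>.hasDerivWithinAt
    have hmv := (convex_Icc a b).norm_image_sub_le_of_norm_hasDerivWithin_le hderiv hosc hm hs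
    have hwm : w m = 0 := by simp [w]
    have hI : 0 ≤ I := (norm_nonneg _).trans (hosc a ⟨le_rfl, hab.le⟩)
    rw [hwm, sub_zero, Real.norm_eq_abs] at hmv
    have : |s - m| ≤ (b - a) / 2 := abs_le.2 ⟨by linarith [hs.1], by linarith [hs.2]⟩
    nlinarith
  have hcont : ContinuousOn f (Set.Icc a b) := fun u hu => (hf u hu).continuousAt.continuousWithinAt
  have hf_int : IntervalIntegrable f volume a b := hcont.intervalIntegrable_of_Icc hab.le
  have hlin_int : IntervalIntegrable (fun s => (s - m) • f' m) volume a b :=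
    (by fun_prop : Continuous fun s : ℝ => (s - m) • f' m).intervalIntegrable a b
  have hlin : ∫ s in a..b, (s - m) = 0 := by
    rw [integral_comp_sub_right (fun s => s), integral_id]; ring
  have hw_int : ∫ s in a..b, w s = (∫ s in a..b, f s) - (b - a) • f m := by
    rw [intervalIntegral.integral_sub (hf_int.sub intervalIntegrable_const) hlin_int,
      intervalIntegral.integral_sub hf_int intervalIntegrable_const,
      intervalIntegral.integral_smul_const, hlin, zero_smul, intervalIntegral.integral_const,
      sub_zero]
  have hwab : (2:ℝ)⁻¹ • (w b + w a) = (2:ℝ)⁻¹ • (f b + f a) - f m := by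
    simp only [w, m]; module
  have hdefect : (2:ℝ)⁻¹ • (f b + f a) - (b - a)⁻¹ • ∫ s in a..b, f s
      = (2:ℝ)⁻¹ • (w b + w a) - (b - a)⁻¹ • ∫ s in a..b, w s := by
    rw [hwab, hw_int, smul_sub, smul_smul, inv_mul_cancel₀ (sub_pos.2 hab).ne', one_smul]
    abel
  rw [hdefect]
  refine norm_sub_average_le hab ((hf_int.sub intervalIntegrable_const).sub hlin_int)
    fun s hs => ?_
  have hs' : s ∈ Set.Icc a b := Set.Ioc_subset_Icc_self hs
  calc ‖(2:ℝ)⁻¹ • (w b + w a) - w s‖ ≤ (2:ℝ)⁻¹ * (‖w b‖ + ‖w a‖) + ‖w s‖ := by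
        refine (norm_sub_le _ _).trans ?_
        rw [norm_smul, Real.norm_eq_abs, abs_of_pos (by norm_num)]
        gcongr
        exact norm_add_le _ _
    _ ≤ (2:ℝ)⁻¹ * (I * (b - a) / 2 + I * (b - a) / 2) + I * (b - a) / 2 := by
        gcongr
        exacts [hw b ⟨hab.le, le_rfl⟩, hw a ⟨le_rfl, hab.le⟩, hw s hs']
    _ = I * (b - a) := by ring

theorem mul_norm_neg_smul_le {κ h K D : ℝ} {x : H} (hκ : 0 ≤ κ) (hh : 0 < h) (hK : h ≤ K)
    (hx : ‖x‖ ≤ D * h) : h * ‖(-κ) • x‖ ≤ κ * D * K ^ 2 := by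
  have hD : 0 ≤ D := nonneg_of_mul_nonneg_left ((norm_nonneg x).trans hx) hh
  rw [norm_smul, norm_neg, Real.norm_of_nonneg hκ]
  calc h * (κ * ‖x‖) ≤ h * (κ * (D * h)) := by gcongr
    _ = κ * D * h ^ 2 := by ring
    _ ≤ κ * D * K ^ 2 := by gcongr

end

theorem stmt_14_general {H : Type*} [NormedAddCommGroup H] [NormedSpace ℝ H] [CompleteSpace H]
    (α κ T C Cγ : ℝ) (hα : 0 < α ∧ α < 1) (hκ : 0 ≤ κ) (hC : 0 < C)
    (hCγ : 0 < Cγ)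
    (v v' v'' : ℝ → H)
    (hd1 : ∀ t ∈ Set.Ioc (0:ℝ) T, HasDerivAt v (v' t) t)
    (hd2 : ∀ t ∈ Set.Ioc (0:ℝ) T, HasDerivAt v' (v'' t) t)
    (hb1 : ∀ t ∈ Set.Ioc (0:ℝ) T, ‖v' t‖ ≤ C)
    (hb2 : ∀ t ∈ Set.Ioc (0:ℝ) T, ‖v'' t‖ ≤ C * t ^ (α - 1)) :
    ∃ C' > 0, ∀ (N : ℕ) (t : ℕ → ℝ) (k : ℝ), 1 ≤ N → 0 < k →
      t 0 = 0 → (∀ n, 1 ≤ n → n ≤ N → t (n - 1) < t n) → t N ≤ T →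
      (∀ n, 1 ≤ n → n ≤ N → t n - t (n - 1) ≤ Cγ * k) →
      (t 1 - t 0) * ‖(-κ : ℝ) • (v (t 1) - (t 1 - t 0)⁻¹ • ∫ s in (t 0)..(t 1), v s)‖
        + ∑ n ∈ Finset.Icc 2 N, (t n - t (n - 1)) *
            ‖(-κ : ℝ) • ((2:ℝ)⁻¹ • (v (t n) + v (t (n - 1)))
              - (t n - t (n - 1))⁻¹ • ∫ s in (t (n - 1))..(t n), v s)‖
      ≤ C' * κ * k ^ 2 * (1 + (t N) ^ α) := by
  obtain ⟨hα0, hα1⟩ := hα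
  refine ⟨Cγ ^ 2 * C / α, by positivity, fun N t k hN _ ht0 hinc htN hmesh => ?_⟩
  have ht_mono : StrictMonoOn t (Set.Iic N) :=
    strictMonoOn_Iic_of_lt_succ fun m hm => by simpa using hinc (m + 1) (by omega) hm
  have ht_pos : ∀ n, 1 ≤ n → n ≤ N → 0 < t n := fun n h1 hn =>
    ht0 ▸ ht_mono (Set.mem_Iic.2 (Nat.zero_le N)) hn (by omega)
  have ht_le : ∀ n ≤ N, t n ≤ T := fun n hn =>
    (ht_mono.monotoneOn hn (Set.mem_Iic.2 le_rfl) hn).trans htN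
  have hfirst := mul_norm_neg_smul_le hκ (sub_pos.2 (hinc 1 le_rfl hN)) (hmesh 1 le_rfl hN)
    (norm_sub_average_le_of_norm_hasDerivAt_le (hinc 1 le_rfl hN)
      (fun u hu => hd1 u ⟨ht0 ▸ hu.1, hu.2.trans (ht_le 1 hN)⟩)
      (fun u hu => hb1 u ⟨ht0 ▸ hu.1, hu.2.trans (ht_le 1 hN)⟩))
  have hstep : ∀ n ∈ Icc 2 N, (t n - t (n - 1)) *
      ‖(-κ : ℝ) • ((2:ℝ)⁻¹ • (v (t n) + v (t (n - 1)))
        - (t n - t (n - 1))⁻¹ • ∫ s in (t (n - 1))..(t n), v s)‖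
      ≤ κ * (C / α) * (Cγ * k) ^ 2 * (t n ^ α - t (n - 1) ^ α) := by
    intro n hn
    obtain ⟨hn2, hnN⟩ := Finset.mem_Icc.1 hn
    have hlt := hinc n (by omega) hnN
    have hIcc : ∀ u ∈ Set.Icc (t (n - 1)) (t n), u ∈ Set.Ioc 0 T := fun u hu =>
      ⟨(ht_pos (n - 1) (by omega) (by omega)).trans_le hu.1, hu.2.trans (ht_le n hnN)⟩
    have hosc (u : ℝ) (hu : u ∈ Set.Icc (t (n - 1)) (t n)) :=
      norm_sub_le_of_mem_Icc_of_norm_hasDerivAt_le_rpow (w := (t (n - 1) + t n) / 2) hα0 hC.le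
        (ht_pos (n - 1) (by omega) (by omega)) (fun u hu => hd2 u (hIcc u hu))
        (fun u hu => hb2 u (hIcc u hu)) hu ⟨by linarith, by linarith⟩
    refine (mul_norm_neg_smul_le hκ (sub_pos.2 hlt) (hmesh n (by omega) hnN)
      (norm_trapezoid_sub_average_le hlt (fun u hu => hd1 u (hIcc u hu)) hosc)).trans_eq ?_
    ring
  have htel : ∑ n ∈ Icc 2 N, (t n ^ α - t (n - 1) ^ α) = t N ^ α - t 1 ^ α :=
    Finset.sum_Icc_two_sub_pred (fun n => t n ^ α) hN
  have ht1 : 0 ≤ t 1 ^ α := rpow_nonneg (ht_pos 1 le_rfl hN).le α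
  have hCα : C ≤ C / α := le_div_self hC.le hα0 hα1.le
  calc _ ≤ κ * C * (Cγ * k) ^ 2 + κ * (C / α) * (Cγ * k) ^ 2 * (t N ^ α - t 1 ^ α) := by
        rw [← htel, Finset.mul_sum]
        exact add_le_add hfirst (Finset.sum_le_sum hstep)
    _ ≤ κ * (C / α) * (Cγ * k) ^ 2 + κ * (C / α) * (Cγ * k) ^ 2 * t N ^ α := by
        gcongr
        linarith
    _ = Cγ ^ 2 * C / α * κ * k ^ 2 * (1 + t N ^ α) := by ring

/-- Lemma 4.6: with `‖v'(t)‖ ≤ C`, `‖v''(t)‖ ≤ C t^{α-1}` on `(0,T]`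
and a mesh satisfying `kₙ ≤ C_γ k`, the truncation errors
`R₃^{1/2} = -κ(v(t₁) - (1/k₁)∫₀^{t₁} v)` and
`R₃^{n-1/2} = -κ((v(tₙ)+v(tₙ₋₁))/2 - (1/kₙ)∫_{tₙ₋₁}^{tₙ} v)` satisfy
`Σ_{n=1}^N kₙ ‖R₃^{n-1/2}‖ ≤ C' κ k² (1 + t_N^α)` with `C'` depending only on
`α`, `γ` (through `C_γ`), `T` and `C`. -/
theorem stmt_14 {H : Type*} [NormedAddCommGroup H] [NormedSpace ℝ H] [CompleteSpace H]
    (α κ T C Cγ : ℝ) (hα : 0 < α ∧ α < 1) (hκ : 0 ≤ κ) (hT : 0 < T) (hC : 0 < C)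
    (hCγ : 0 < Cγ)
    (v v' v'' : ℝ → H)
    (hd1 : ∀ t ∈ Set.Ioc (0:ℝ) T, HasDerivAt v (v' t) t)
    (hd2 : ∀ t ∈ Set.Ioc (0:ℝ) T, HasDerivAt v' (v'' t) t)
    (hb1 : ∀ t ∈ Set.Ioc (0:ℝ) T, ‖v' t‖ ≤ C)
    (hb2 : ∀ t ∈ Set.Ioc (0:ℝ) T, ‖v'' t‖ ≤ C * t ^ (α - 1)) :
    ∃ C' > 0, ∀ (N : ℕ) (t : ℕ → ℝ) (k : ℝ), 1 ≤ N → 0 < k →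
      t 0 = 0 → (∀ n, 1 ≤ n → n ≤ N → t (n - 1) < t n) → t N ≤ T →
      (∀ n, 1 ≤ n → n ≤ N → t n - t (n - 1) ≤ Cγ * k) →
      (t 1 - t 0) * ‖(-κ : ℝ) • (v (t 1) - (t 1 - t 0)⁻¹ • ∫ s in (t 0)..(t 1), v s)‖
        + ∑ n ∈ Finset.Icc 2 N, (t n - t (n - 1)) *
            ‖(-κ : ℝ) • ((2:ℝ)⁻¹ • (v (t n) + v (t (n - 1)))
              - (t n - t (n - 1))⁻¹ • ∫ s in (t (n - 1))..(t n), v s)‖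
      ≤ C' * κ * k ^ 2 * (1 + (t N) ^ α) :=
  stmt_14_general α κ T C Cγ hα hκ hC hCγ v v' v'' hd1 hd2 hb1 hb2
end
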